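/- arXiv:2112.03196 — 2 statements merged into one kernel-verified Lean document; each statement's English description precedes it below -/
import Mathlib

section
/- For any lag L ∈ ℕ, the thresholds defined by α_t = α η γ̃_t + α ∑_{j≥1} δ^{t−ρ_j} γ_{t−ρ_j−L} satisfy, for every T ≥ 1, the oracle bound ∑_{t=1}^T δ^{T−t} α_t ≤ α · (R_δ(T) + η); equivalently the quantity P(T) = α(R_δ(T) + η) − ∑_{t=1}^T δ^{T−t} α_t is non-negative for all T. -/
/-- The time `ρ_j` of the `j`-th rejection: `min {t ≥ 0 : ∑_{i=1}^t R_i ≥ j}`,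
equal to `⊤` (infinity) if no such time exists. -/
noncomputable def rejTime (R : ℕ → ℝ) (j : ℕ) : ℕ∞ :=
  sInf {n : ℕ∞ | ∃ m : ℕ, n = (m : ℕ∞) ∧ (j : ℝ) ≤ ∑ i ∈ Finset.Icc 1 m, R i}

/-- The term `δ^{t−ρ} γ_{t−ρ−L}`, interpreted as `0` when `ρ = ∞`. -/
noncomputable def decayTermL (δ : ℝ) (γ : ℤ → ℝ) (L t : ℕ) (ρ : ℕ∞) : ℝ :=
  ρ.recTopCoe 0 fun r => δ ^ (t - r) * γ ((t : ℤ) - (r : ℤ) - (L : ℤ))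

/-!
A rejection at time `ρ` feeds the thresholds the sequence `δ^{t-ρ} γ_{t-ρ-L}`, whose discounted
total up to `T` is `δ^{T-ρ} ∑ γ ≤ δ^{T-ρ}`: at most the contribution `δ^{T-ρ} R_ρ` of that same
rejection to `R_δ(T)`. Distinct rejections happen at distinct times, so summing over them bounds
the rejection part of the thresholds by `α R_δ(T)`, while the `η γ̃` part contributes at most `α η`.
-/

open Finset

section RejectionTimes

variable {R : ℕ → ℝ} {j k r : ℕ}

lemma rejTime_le_of_le_sum {m : ℕ} (hm : (j : ℝ) ≤ ∑ i ∈ Icc 1 m, R i) : rejTime R j ≤ m :=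
  sInf_le ⟨m, rfl, hm⟩

lemma sum_lt_of_lt_rejTime {m : ℕ} (hm : (m : ℕ∞) < rejTime R j) : ∑ i ∈ Icc 1 m, R i < j := by
  by_contra! h
  exact (rejTime_le_of_le_sum h).not_gt hm

lemma le_sum_of_rejTime_eq (h : rejTime R j = r) : (j : ℝ) ≤ ∑ i ∈ Icc 1 r, R i := by
  have hne : {n : ℕ∞ | ∃ m : ℕ, n = m ∧ (j : ℝ) ≤ ∑ i ∈ Icc 1 m, R i}.Nonempty := by
    by_contra hempty
    rw [Set.not_nonempty_iff_eq_empty] at hempty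
    simp [rejTime, hempty] at h
  obtain ⟨m, hm, hle⟩ := csInf_mem hne
  have hmr : m = r := by exact_mod_cast hm.symm.trans h
  rwa [hmr] at hle

lemma sum_lt_of_rejTime_eq_succ {m : ℕ} (h : rejTime R j = (m + 1 : ℕ)) :
    ∑ i ∈ Icc 1 m, R i < j :=
  sum_lt_of_lt_rejTime (by rw [h]; exact_mod_cast m.lt_succ_self)

lemma sum_Icc_le_of_le_one (hR1 : ∀ t, R t ≤ 1) (m : ℕ) : ∑ i ∈ Icc 1 m, R i ≤ m :=
  (sum_le_sum fun i _ => hR1 i).trans (by simp)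

lemma le_of_rejTime_eq (hR1 : ∀ t, R t ≤ 1) (h : rejTime R j = r) : j ≤ r := by
  exact_mod_cast (le_sum_of_rejTime_eq h).trans (sum_Icc_le_of_le_one hR1 r)

lemma sum_lt_of_rejTime_eq (hR1 : ∀ t, R t ≤ 1) (h : rejTime R j = r) :
    ∑ i ∈ Icc 1 r, R i < j + 1 := by
  cases r with
  | zero => simp only [Icc_eq_empty_of_lt zero_lt_one, sum_empty]; positivity
  | succ m =>
    have hm := sum_lt_of_rejTime_eq_succ h
    rw [sum_Icc_succ_top (by omega)]
    linarith [hR1 (m + 1)]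

lemma eq_of_rejTime_eq_rejTime (hR1 : ∀ t, R t ≤ 1) (hj : rejTime R j = r)
    (hk : rejTime R k = r) : j = k := by
  have hjk : (j : ℝ) < k + 1 := (le_sum_of_rejTime_eq hj).trans_lt (sum_lt_of_rejTime_eq hR1 hk)
  have hkj : (k : ℝ) < j + 1 := (le_sum_of_rejTime_eq hk).trans_lt (sum_lt_of_rejTime_eq hR1 hj)
  norm_cast at hjk hkj
  omega

lemma apply_rejTime_eq_one (hR : ∀ t, R t = 0 ∨ R t = 1) (hj : 1 ≤ j) (h : rejTime R j = r) :
    R r = 1 := by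
  have hle := le_sum_of_rejTime_eq h
  cases r with
  | zero =>
    simp only [Icc_eq_empty_of_lt zero_lt_one, sum_empty, Nat.cast_nonpos] at hle
    omega
  | succ m =>
    have hm := sum_lt_of_rejTime_eq_succ h
    rw [sum_Icc_succ_top (by omega)] at hle
    exact (hR (m + 1)).resolve_left fun h0 => by linarith

end RejectionTimes

section DecayTerms

variable {δ : ℝ} {γ : ℤ → ℝ} {L : ℕ}

@[simp]
lemma decayTermL_coe (t r : ℕ) :
    decayTermL δ γ L t r = δ ^ (t - r) * γ ((t : ℤ) - (r : ℤ) - (L : ℤ)) := rfl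

lemma decayTermL_eq_zero_of_le (hγ_zero : ∀ t : ℤ, t ≤ 0 → γ t = 0) {t : ℕ} {ρ : ℕ∞}
    (h : (t : ℕ∞) ≤ ρ) : decayTermL δ γ L t ρ = 0 := by
  induction ρ using ENat.recTopCoe with
  | top => rfl
  | coe r =>
    norm_cast at h
    rw [decayTermL_coe, hγ_zero _ (by omega), mul_zero]

lemma sum_Icc_comp_sub (hγ_zero : ∀ t : ℤ, t ≤ 0 → γ t = 0) (T a : ℕ) :
    ∑ t ∈ Icc 1 T, γ ((t : ℤ) - a) = ∑ t ∈ Icc 1 (T - a), γ t := by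
  induction T with
  | zero => simp
  | succ T ih =>
    rw [sum_Icc_succ_top (by omega), ih]
    rcases le_or_gt (T + 1) a with h | h
    · rw [hγ_zero _ (by omega), add_zero, show T + 1 - a = T - a by omega]
    · rw [show T + 1 - a = T - a + 1 by omega, sum_Icc_succ_top (by omega)]
      push_cast [Nat.cast_sub (show a ≤ T by omega)]
      ring_nf

lemma sum_pow_mul_decayTermL_le (hδ : 0 ≤ δ) (hγ_zero : ∀ t : ℤ, t ≤ 0 → γ t = 0)
    (hγ_sum : ∀ T : ℕ, ∑ t ∈ Icc 1 T, γ (t : ℤ) ≤ 1) (T r : ℕ) :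
    ∑ t ∈ Icc 1 T, δ ^ (T - t) * decayTermL δ γ L t r ≤ δ ^ (T - r) := by
  have hterm : ∀ t ∈ Icc 1 T,
      δ ^ (T - t) * decayTermL δ γ L t r = δ ^ (T - r) * γ ((t : ℤ) - (r + L : ℕ)) := by
    intro t ht
    have htT := (mem_Icc.mp ht).2
    rw [decayTermL_coe, Nat.cast_add, ← sub_sub]
    rcases le_or_gt t (r + L) with h | h
    · rw [hγ_zero _ (by omega), mul_zero, mul_zero, mul_zero]
    · rw [← mul_assoc, ← pow_add, show T - t + (t - r) = T - r by omega]
  calc ∑ t ∈ Icc 1 T, δ ^ (T - t) * decayTermL δ γ L t r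
      = δ ^ (T - r) * ∑ t ∈ Icc 1 (T - (r + L)), γ t := by
        rw [sum_congr rfl hterm, ← mul_sum, sum_Icc_comp_sub hγ_zero]
    _ ≤ δ ^ (T - r) := mul_le_of_le_one_right (pow_nonneg hδ _) (hγ_sum _)

end DecayTerms

/-- `j ∈ rejIndices R T` iff `ρ_{j+1} ≤ T`: the bound `j < T` is automatic, as `ρ_{j+1} ≥ j + 1`. -/
noncomputable def rejIndices (R : ℕ → ℝ) (T : ℕ) : Finset ℕ :=
  {j ∈ range T | rejTime R (j + 1) ≤ T}

section Rejections

variable {R : ℕ → ℝ} {T : ℕ}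

lemma rejTime_eq_toNat_of_mem_rejIndices {j : ℕ} (hj : j ∈ rejIndices R T) :
    rejTime R (j + 1) = (rejTime R (j + 1)).toNat :=
  (ENat.natCast_toNat (ne_top_of_le_ne_top (ENat.natCast_ne_top T) (mem_filter.mp hj).2)).symm

lemma sum_rejIndices_le (hR : ∀ t, R t = 0 ∨ R t = 1) (f : ℕ → ℝ) (hf : ∀ i, 0 ≤ f i) :
    ∑ j ∈ rejIndices R T, f (rejTime R (j + 1)).toNat ≤ ∑ t ∈ Icc 1 T, f t * R t := by
  have hR1 : ∀ t, R t ≤ 1 := fun t => (hR t).elim (fun h => h ▸ zero_le_one) le_of_eq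
  let e : ℕ → ℕ := fun j => (rejTime R (j + 1)).toNat
  have hinj : Set.InjOn e (rejIndices R T) := fun j hj k hk hjk => by
    have := eq_of_rejTime_eq_rejTime hR1 (rejTime_eq_toNat_of_mem_rejIndices hj)
      ((rejTime_eq_toNat_of_mem_rejIndices hk).trans (congrArg _ hjk.symm))
    omega
  have himage : (rejIndices R T).image e ⊆ Icc 1 T := by
    intro i hi
    obtain ⟨j, hj, rfl⟩ := mem_image.mp hi
    have h1 := le_of_rejTime_eq hR1 (rejTime_eq_toNat_of_mem_rejIndices hj)
    have h2 := ENat.toNat_le_of_le_natCast (mem_filter.mp hj).2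
    exact mem_Icc.mpr ⟨show 1 ≤ (rejTime R (j + 1)).toNat by omega, h2⟩
  calc ∑ j ∈ rejIndices R T, f (e j)
      = ∑ j ∈ rejIndices R T, f (e j) * R (e j) := sum_congr rfl fun j hj => by
        rw [apply_rejTime_eq_one hR (by omega) (rejTime_eq_toNat_of_mem_rejIndices hj), mul_one]
    _ = ∑ i ∈ (rejIndices R T).image e, f i * R i := (sum_image (f := fun i => f i * R i) hinj).symm
    _ ≤ ∑ t ∈ Icc 1 T, f t * R t := sum_le_sum_of_subset_of_nonneg himage
        fun i _ _ => mul_nonneg (hf i) ((hR i).elim (fun h => h.ge) fun h => h ▸ zero_le_one)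

variable {δ : ℝ} {γ : ℤ → ℝ} {L : ℕ}

lemma tsum_decayTermL_rejTime_eq_sum (hγ_zero : ∀ t : ℤ, t ≤ 0 → γ t = 0)
    (hR1 : ∀ t, R t ≤ 1) {t : ℕ} (ht : t ≤ T) :
    ∑' j, decayTermL δ γ L t (rejTime R (j + 1))
      = ∑ j ∈ rejIndices R T, decayTermL δ γ L t (rejTime R (j + 1)) := by
  refine tsum_eq_sum fun j hj => decayTermL_eq_zero_of_le hγ_zero ?_
  by_contra! hlt
  obtain ⟨r, hr⟩ := ENat.ne_top_iff_exists.mp (hlt.trans_le le_top).ne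
  have hjr := le_of_rejTime_eq hR1 hr.symm
  rw [← hr] at hlt
  norm_cast at hlt
  refine hj (mem_filter.mpr ⟨mem_range.mpr (by omega), ?_⟩)
  rw [← hr]
  exact_mod_cast (by omega : r ≤ T)

lemma sum_pow_mul_tsum_decayTermL_rejTime_le (hδ : 0 ≤ δ)
    (hγ_zero : ∀ t : ℤ, t ≤ 0 → γ t = 0) (hγ_sum : ∀ T : ℕ, ∑ t ∈ Icc 1 T, γ (t : ℤ) ≤ 1)
    (hR : ∀ t, R t = 0 ∨ R t = 1) :
    ∑ t ∈ Icc 1 T, δ ^ (T - t) * ∑' j, decayTermL δ γ L t (rejTime R (j + 1))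
      ≤ ∑ t ∈ Icc 1 T, δ ^ (T - t) * R t := by
  have hR1 : ∀ t, R t ≤ 1 := fun t => (hR t).elim (fun h => h ▸ zero_le_one) le_of_eq
  calc ∑ t ∈ Icc 1 T, δ ^ (T - t) * ∑' j, decayTermL δ γ L t (rejTime R (j + 1))
      = ∑ j ∈ rejIndices R T, ∑ t ∈ Icc 1 T,
          δ ^ (T - t) * decayTermL δ γ L t (rejTime R (j + 1)) := by
        rw [sum_comm]
        refine sum_congr rfl fun t ht => ?_
        rw [tsum_decayTermL_rejTime_eq_sum hγ_zero hR1 (mem_Icc.mp ht).2, mul_sum]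
    _ ≤ ∑ j ∈ rejIndices R T, δ ^ (T - (rejTime R (j + 1)).toNat) :=
        sum_le_sum fun j hj => by
          rw [rejTime_eq_toNat_of_mem_rejIndices hj]
          exact sum_pow_mul_decayTermL_le hδ hγ_zero hγ_sum T _
    _ ≤ ∑ t ∈ Icc 1 T, δ ^ (T - t) * R t :=
        sum_rejIndices_le hR (fun i => δ ^ (T - i)) fun i => pow_nonneg hδ _

end Rejections

theorem lord_decay_local_dependency_oracle_bound_general (δ α η : ℝ) (L : ℕ)
    (hδ : δ ∈ Set.Ioc (0 : ℝ) 1) (hα : α ∈ Set.Ioo (0 : ℝ) 1) (hη : 0 < η)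
    (γ : ℤ → ℝ) (hγ_zero : ∀ t : ℤ, t ≤ 0 → γ t = 0)
    (hγ_sum : ∀ T : ℕ, ∑ t ∈ Finset.Icc 1 T, γ (t : ℤ) ≤ 1)
    (γ' : ℕ → ℝ)
    (hγ'_sum : ∀ T : ℕ, 1 ≤ T → ∑ t ∈ Finset.Icc 1 T, δ ^ (T - t) * γ' t ≤ 1)
    (R : ℕ → ℝ) (hR : ∀ t, R t = 0 ∨ R t = 1)
    (A : ℕ → ℝ)
    (hA : ∀ t : ℕ,
      A t = α * η * γ' t + α * ∑' j : ℕ, decayTermL δ γ L t (rejTime R (j + 1)))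
    (T : ℕ) (hT : 1 ≤ T) :
    ∑ t ∈ Finset.Icc 1 T, δ ^ (T - t) * A t
      ≤ α * ((∑ t ∈ Finset.Icc 1 T, δ ^ (T - t) * R t) + η) := by
  have hαη : 0 ≤ α * η := mul_nonneg hα.1.le hη.le
  have hbaseline := mul_le_mul_of_nonneg_left (hγ'_sum T hT) hαη
  have hrejections := mul_le_mul_of_nonneg_left
    (sum_pow_mul_tsum_decayTermL_rejTime_le (L := L) (T := T) hδ.1.le hγ_zero hγ_sum hR) hα.1.le
  have hsplit : ∑ t ∈ Icc 1 T, δ ^ (T - t) * A t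
      = α * η * ∑ t ∈ Icc 1 T, δ ^ (T - t) * γ' t
        + α * ∑ t ∈ Icc 1 T, δ ^ (T - t) * ∑' j, decayTermL δ γ L t (rejTime R (j + 1)) := by
    simp only [hA, mul_sum, ← sum_add_distrib]
    exact sum_congr rfl fun t _ => by ring
  linarith

/-- For any lag `L`, the thresholds `α_t = α η γ̃_t + α ∑_{j≥1} δ^{t−ρ_j} γ_{t−ρ_j−L}`
satisfy the oracle bound `∑_{t=1}^T δ^{T−t} α_t ≤ α (R_δ(T) + η)` for every `T ≥ 1`. -/
theorem lord_decay_local_dependency_oracle_bound (δ α η : ℝ) (L : ℕ)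
    (hδ : δ ∈ Set.Ioc (0 : ℝ) 1) (hα : α ∈ Set.Ioo (0 : ℝ) 1) (hη : 0 < η)
    (γ : ℤ → ℝ) (hγ_nonneg : ∀ t, 0 ≤ γ t) (hγ_zero : ∀ t : ℤ, t ≤ 0 → γ t = 0)
    (hγ_anti : ∀ s t : ℤ, 1 ≤ s → s ≤ t → γ t ≤ γ s)
    (hγ_sum : ∀ T : ℕ, ∑ t ∈ Finset.Icc 1 T, γ (t : ℤ) ≤ 1)
    (γ' : ℕ → ℝ) (hγ'_pos : ∀ t, 1 ≤ t → 0 < γ' t)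
    (hγ'_anti : ∀ s t : ℕ, 1 ≤ s → s ≤ t → γ' t ≤ γ' s)
    (hγ'_sum : ∀ T : ℕ, 1 ≤ T → ∑ t ∈ Finset.Icc 1 T, δ ^ (T - t) * γ' t ≤ 1)
    (R : ℕ → ℝ) (hR : ∀ t, R t = 0 ∨ R t = 1)
    (A : ℕ → ℝ)
    (hA : ∀ t : ℕ,
      A t = α * η * γ' t + α * ∑' j : ℕ, decayTermL δ γ L t (rejTime R (j + 1)))
    (T : ℕ) (hT : 1 ≤ T) :
    ∑ t ∈ Finset.Icc 1 T, δ ^ (T - t) * A t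
      ≤ α * ((∑ t ∈ Finset.Icc 1 T, δ ^ (T - t) * R t) + η) :=
  lord_decay_local_dependency_oracle_bound_general δ α η L hδ hα hη γ hγ_zero hγ_sum γ' hγ'_sum R hR
    A hA T hT
end

section
/- For any w_0 ∈ (0, α), the thresholds defined by α_t = w_0 γ̃_t + (α − w_0) ∑_{j≥1} δ^{t−ρ_j} γ_{t−ρ_j} satisfy, for every T ≥ 1, the oracle bound ∑_{t=1}^T δ^{T−t} α_t ≤ α · max(R_δ(T), 1). -/
/-!
Each rejection at time `m` contributes to the thresholds the decayed tail
`δ^{t-m} γ_{t-m}`, whose discounted total up to time `T` is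
`δ^{T-m} ∑_{u ≤ T-m} γ_u ≤ δ^{T-m}`. Distinct rejections happen at distinct times `m ≤ T`
with `R_m = 1`, so the rejection part of `∑_t δ^{T-t} α_t` is at most `(α - w₀) R_δ(T)`, while
the initial wealth part is at most `w₀` by the assumption on `γ̃`. Both are at most
`max (R_δ(T)) 1`, and `w₀ + (α - w₀) = α`.
-/

open Finset

/-- The term `δ^{t−ρ} γ_{t−ρ}`, interpreted as `0` when `ρ = ∞`. -/
noncomputable def decayTerm (δ : ℝ) (γ : ℤ → ℝ) (t : ℕ) (ρ : ℕ∞) : ℝ :=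
  ρ.recTopCoe 0 fun r => δ ^ (t - r) * γ ((t : ℤ) - (r : ℤ))

section RejectionTimes

variable {R : ℕ → ℝ} {j m : ℕ}

theorem le_sum_Icc_of_rejTime_eq (h : rejTime R j = m) : (j : ℝ) ≤ ∑ i ∈ Icc 1 m, R i := by
  set s : Set ℕ∞ := {n | ∃ m : ℕ, n = (m : ℕ∞) ∧ (j : ℝ) ≤ ∑ i ∈ Icc 1 m, R i}
  have hs : s.Nonempty := by
    by_contra hs
    rw [show rejTime R j = sInf s from rfl, Set.not_nonempty_iff_eq_empty.mp hs, sInf_empty] at h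
    exact ENat.top_ne_natCast m h
  obtain ⟨m', hm', hle⟩ : sInf s ∈ s := csInf_mem hs
  obtain rfl : m = m' := by exact_mod_cast h.symm.trans hm'
  exact hle

theorem rejTime_le_of_le_sum_Icc (h : (j : ℝ) ≤ ∑ i ∈ Icc 1 m, R i) : rejTime R j ≤ m :=
  sInf_le ⟨m, rfl, h⟩

theorem sum_Icc_lt_of_lt_rejTime (h : (m : ℕ∞) < rejTime R j) : ∑ i ∈ Icc 1 m, R i < j :=
  lt_of_not_ge fun hle => (rejTime_le_of_le_sum_Icc hle).not_gt h

variable (hR : ∀ t, R t = 0 ∨ R t = 1)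
include hR

theorem sum_Icc_le_of_zero_or_one : ∑ i ∈ Icc 1 m, R i ≤ m := by
  calc ∑ i ∈ Icc 1 m, R i ≤ ∑ i ∈ Icc 1 m, (1 : ℝ) :=
        sum_le_sum fun i _ => by rcases hR i with h | h <;> simp [h]
    _ = m := by simp

theorem natCast_le_rejTime (j : ℕ) : (j : ℕ∞) ≤ rejTime R j := by
  cases h : rejTime R j with
  | top => exact le_top
  | coe m => exact_mod_cast (le_sum_Icc_of_rejTime_eq h).trans (sum_Icc_le_of_zero_or_one hR)

theorem sum_Icc_pred_lt_of_rejTime_eq (h : rejTime R j = m) (hj : 1 ≤ j) :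
    ∑ i ∈ Icc 1 (m - 1), R i < j ∧ (j : ℝ) ≤ ∑ i ∈ Icc 1 (m - 1), R i + R m := by
  have hjm : j ≤ m := by exact_mod_cast h ▸ natCast_le_rejTime hR j
  obtain ⟨k, rfl⟩ : ∃ k, m = k + 1 := ⟨m - 1, by omega⟩
  refine ⟨sum_Icc_lt_of_lt_rejTime (by rw [h]; exact_mod_cast k.lt_succ_self), ?_⟩
  rw [Nat.add_sub_cancel, ← sum_Icc_succ_top (by omega)]
  exact le_sum_Icc_of_rejTime_eq h

theorem eq_one_of_rejTime_eq (h : rejTime R j = m) (hj : 1 ≤ j) : R m = 1 := by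
  obtain ⟨hlt, hle⟩ := sum_Icc_pred_lt_of_rejTime_eq hR h hj
  rcases hR m with h0 | h1
  · linarith
  · exact h1

/-- Since the increments are at most one, the count cannot jump past two levels at once. -/
theorem rejTime_injOn : Set.InjOn (rejTime R) {j | rejTime R j ≠ ⊤} := by
  suffices ∀ i j, i < j → rejTime R j ≠ ⊤ → rejTime R i ≠ rejTime R j by
    intro i _ j hj hij
    by_contra hne
    rcases lt_or_gt_of_ne hne with hlt | hlt
    · exact this i j hlt hj hij
    · exact this j i hlt (hij ▸ hj) hij.symm
  intro i j hij hj hij'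
  obtain ⟨m, hm⟩ := ENat.ne_top_iff_exists.mp hj
  have hjm : j ≤ m := by exact_mod_cast hm ▸ natCast_le_rejTime hR j
  obtain ⟨-, hle⟩ := sum_Icc_pred_lt_of_rejTime_eq hR hm.symm (by omega)
  have hlt : ∑ k ∈ Icc 1 (m - 1), R k < i :=
    sum_Icc_lt_of_lt_rejTime (by rw [hij', ← hm]; exact_mod_cast (by omega))
  have hRm : R m ≤ 1 := by rcases hR m with h | h <;> simp [h]
  have : (i : ℝ) + 1 ≤ j := by exact_mod_cast hij
  linarith

end RejectionTimes

section DecayTerm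

variable {δ : ℝ} {γ : ℤ → ℝ} {t T m : ℕ}

theorem decayTerm_eq_zero_of_le (hγ : ∀ t : ℤ, t ≤ 0 → γ t = 0) {ρ : ℕ∞} (h : (t : ℕ∞) ≤ ρ) :
    decayTerm δ γ t ρ = 0 := by
  cases ρ with
  | top => rfl
  | coe m =>
    have : t ≤ m := by exact_mod_cast h
    exact mul_eq_zero_of_right _ (hγ _ (by omega))

theorem sum_Icc_comp_sub_natCast (hγ : ∀ t : ℤ, t ≤ 0 → γ t = 0) (T m : ℕ) :
    ∑ t ∈ Icc 1 T, γ ((t : ℤ) - m) = ∑ u ∈ Icc 1 (T - m), γ u := by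
  have hshift : ∑ u ∈ Icc 1 (T - m), γ u = ∑ t ∈ Icc (1 + m) (T - m + m), γ ((t : ℤ) - m) := by
    rw [← map_add_right_Icc, sum_map]
    simp
  rw [hshift]
  have hsub : Icc (1 + m) (T - m + m) ⊆ Icc 1 T := fun t ht => by
    simp only [mem_Icc] at ht ⊢
    omega
  refine (sum_subset hsub fun t ht hnot => hγ _ ?_).symm
  simp only [mem_Icc] at ht hnot
  omega

theorem sum_Icc_pow_mul_decayTerm_eq_zero_of_lt (hγ : ∀ t : ℤ, t ≤ 0 → γ t = 0) {ρ : ℕ∞}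
    (hρ : (T : ℕ∞) < ρ) : ∑ t ∈ Icc 1 T, δ ^ (T - t) * decayTerm δ γ t ρ = 0 :=
  sum_eq_zero fun t ht => by
    have htT : (t : ℕ∞) ≤ T := by exact_mod_cast (mem_Icc.1 ht).2
    rw [decayTerm_eq_zero_of_le hγ (htT.trans hρ.le), mul_zero]

theorem sum_Icc_pow_mul_decayTerm_le (hδ : 0 ≤ δ) (hγ : ∀ t : ℤ, t ≤ 0 → γ t = 0)
    (hγ_sum : ∀ n : ℕ, ∑ t ∈ Icc 1 n, γ (t : ℤ) ≤ 1) (T m : ℕ) :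
    ∑ t ∈ Icc 1 T, δ ^ (T - t) * decayTerm δ γ t m ≤ δ ^ (T - m) := by
  have hterm : ∀ t ∈ Icc 1 T,
      δ ^ (T - t) * decayTerm δ γ t m = δ ^ (T - m) * γ ((t : ℤ) - m) := by
    intro t ht
    rcases le_or_gt t m with htm | hmt
    · rw [decayTerm_eq_zero_of_le hγ (Nat.cast_le.mpr htm), hγ ((t : ℤ) - m) (by omega)]
      simp
    · rw [mem_Icc] at ht
      rw [decayTerm, ENat.recTopCoe_natCast, ← mul_assoc, ← pow_add]
      congr 2
      omega
  rw [sum_congr rfl hterm, ← mul_sum, sum_Icc_comp_sub_natCast hγ]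
  exact mul_le_of_le_one_right (pow_nonneg hδ _) (hγ_sum _)

end DecayTerm

section Thresholds

variable {δ : ℝ} {γ : ℤ → ℝ} {R : ℕ → ℝ}

/-- Rejections with index `j ∈ s` happen at distinct times `m ≤ T` with `R m = 1`, and the
discounted decay started by each is at most `δ ^ (T - m)`. -/
theorem sum_sum_pow_mul_decayTerm_rejTime_le (hδ : 0 ≤ δ) (hγ : ∀ t : ℤ, t ≤ 0 → γ t = 0)
    (hγ_sum : ∀ n : ℕ, ∑ t ∈ Icc 1 n, γ (t : ℤ) ≤ 1) (hR : ∀ t, R t = 0 ∨ R t = 1)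
    (s : Finset ℕ) (T : ℕ) :
    ∑ j ∈ s, ∑ t ∈ Icc 1 T, δ ^ (T - t) * decayTerm δ γ t (rejTime R (j + 1))
      ≤ ∑ t ∈ Icc 1 T, δ ^ (T - t) * R t := by
  set s' := s.filter fun j => rejTime R (j + 1) ≤ T
  set φ : ℕ → ℕ := fun j => (rejTime R (j + 1)).toNat
  have hφ : ∀ j ∈ s', rejTime R (j + 1) = φ j := fun j hj =>
    (ENat.natCast_toNat (ne_top_of_le_ne_top (ENat.natCast_ne_top T) (mem_filter.1 hj).2)).symm
  have hφ_mem : ∀ j ∈ s', φ j ∈ Icc 1 T := by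
    intro j hj
    have h1 : j + 1 ≤ φ j := by exact_mod_cast hφ j hj ▸ natCast_le_rejTime hR (j + 1)
    have h2 : φ j ≤ T := by exact_mod_cast hφ j hj ▸ (mem_filter.1 hj).2
    exact mem_Icc.2 ⟨by omega, h2⟩
  have hφ_inj : Set.InjOn φ s' := fun i hi j hj hij => by
    have hi' : rejTime R (i + 1) ≠ ⊤ := by simp [hφ i hi]
    have hj' : rejTime R (j + 1) ≠ ⊤ := by simp [hφ j hj]
    have := rejTime_injOn hR hi' hj' (by rw [hφ i hi, hφ j hj, hij])
    omega
  have hoff : ∀ j ∈ s, j ∉ s' →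
      ∑ t ∈ Icc 1 T, δ ^ (T - t) * decayTerm δ γ t (rejTime R (j + 1)) = 0 := fun j hj hj' =>
    sum_Icc_pow_mul_decayTerm_eq_zero_of_lt hγ (by simpa [s', hj] using hj')
  have hR_nonneg : ∀ t, 0 ≤ R t := fun t => by rcases hR t with h | h <;> simp [h]
  calc ∑ j ∈ s, ∑ t ∈ Icc 1 T, δ ^ (T - t) * decayTerm δ γ t (rejTime R (j + 1))
      = ∑ j ∈ s', ∑ t ∈ Icc 1 T, δ ^ (T - t) * decayTerm δ γ t (rejTime R (j + 1)) :=
        (sum_subset (filter_subset _ _) hoff).symm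
    _ ≤ ∑ j ∈ s', δ ^ (T - φ j) * R (φ j) := sum_le_sum fun j hj => by
        rw [hφ j hj, eq_one_of_rejTime_eq hR (hφ j hj) (by omega), mul_one]
        exact sum_Icc_pow_mul_decayTerm_le hδ hγ hγ_sum T (φ j)
    _ = ∑ m ∈ s'.image φ, δ ^ (T - m) * R m :=
        (sum_image (f := fun m => δ ^ (T - m) * R m) hφ_inj).symm
    _ ≤ ∑ t ∈ Icc 1 T, δ ^ (T - t) * R t :=
        sum_le_sum_of_subset_of_nonneg (image_subset_iff.2 hφ_mem)
          fun t _ _ => mul_nonneg (pow_nonneg hδ _) (hR_nonneg t)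

theorem tsum_decayTerm_rejTime_eq_sum_range (hγ : ∀ t : ℤ, t ≤ 0 → γ t = 0)
    (hR : ∀ t, R t = 0 ∨ R t = 1) {t n : ℕ} (htn : t ≤ n) :
    ∑' j : ℕ, decayTerm δ γ t (rejTime R (j + 1))
      = ∑ j ∈ range n, decayTerm δ γ t (rejTime R (j + 1)) := by
  refine tsum_eq_sum fun j hj => decayTerm_eq_zero_of_le hγ ?_
  refine le_trans ?_ (natCast_le_rejTime hR (j + 1))
  have : n ≤ j := by simpa using hj
  exact_mod_cast (by omega : t ≤ j + 1)

end Thresholds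

theorem lord_decay_standard_fdr_oracle_bound_general (δ α w₀ : ℝ)
    (hδ : δ ∈ Set.Ioc (0 : ℝ) 1)
    (hw₀ : w₀ ∈ Set.Ioo (0 : ℝ) α)
    (γ : ℤ → ℝ) (hγ_zero : ∀ t : ℤ, t ≤ 0 → γ t = 0)
    (hγ_sum : ∀ T : ℕ, ∑ t ∈ Finset.Icc 1 T, γ (t : ℤ) ≤ 1)
    (γ' : ℕ → ℝ)
    (hγ'_sum : ∀ T : ℕ, 1 ≤ T → ∑ t ∈ Finset.Icc 1 T, δ ^ (T - t) * γ' t ≤ 1)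
    (R : ℕ → ℝ) (hR : ∀ t, R t = 0 ∨ R t = 1)
    (A : ℕ → ℝ)
    (hA : ∀ t : ℕ,
      A t = w₀ * γ' t + (α - w₀) * ∑' j : ℕ, decayTerm δ γ t (rejTime R (j + 1)))
    (T : ℕ) (hT : 1 ≤ T) :
    ∑ t ∈ Finset.Icc 1 T, δ ^ (T - t) * A t
      ≤ α * max (∑ t ∈ Finset.Icc 1 T, δ ^ (T - t) * R t) 1 := by
  set M := max (∑ t ∈ Icc 1 T, δ ^ (T - t) * R t) 1
  have hsplit : ∑ t ∈ Icc 1 T, δ ^ (T - t) * A t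
      = w₀ * ∑ t ∈ Icc 1 T, δ ^ (T - t) * γ' t + (α - w₀) *
          ∑ j ∈ range T, ∑ t ∈ Icc 1 T, δ ^ (T - t) * decayTerm δ γ t (rejTime R (j + 1)) := by
    rw [sum_comm, mul_sum, mul_sum, ← sum_add_distrib]
    refine sum_congr rfl fun t ht => ?_
    rw [hA, tsum_decayTerm_rejTime_eq_sum_range hγ_zero hR (mem_Icc.1 ht).2,
      ← mul_sum]
    ring
  have hwealth : ∑ t ∈ Icc 1 T, δ ^ (T - t) * γ' t ≤ M := (hγ'_sum T hT).trans (le_max_right _ _)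
  have hrejections :
      ∑ j ∈ range T, ∑ t ∈ Icc 1 T, δ ^ (T - t) * decayTerm δ γ t (rejTime R (j + 1)) ≤ M :=
    (sum_sum_pow_mul_decayTerm_rejTime_le hδ.1.le hγ_zero hγ_sum hR _ T).trans (le_max_left _ _)
  rw [hsplit]
  calc _ ≤ w₀ * M + (α - w₀) * M := by
        gcongr
        · exact hw₀.1.le
        · exact sub_nonneg.2 hw₀.2.le
    _ = α * M := by ring

/-- For any `w₀ ∈ (0, α)`, the thresholds
`α_t = w₀ γ̃_t + (α − w₀) ∑_{j≥1} δ^{t−ρ_j} γ_{t−ρ_j}` satisfy the oracle bound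
`∑_{t=1}^T δ^{T−t} α_t ≤ α · max(R_δ(T), 1)` for every `T ≥ 1`. -/
theorem lord_decay_standard_fdr_oracle_bound (δ α w₀ : ℝ)
    (hδ : δ ∈ Set.Ioc (0 : ℝ) 1) (hα : α ∈ Set.Ioo (0 : ℝ) 1)
    (hw₀ : w₀ ∈ Set.Ioo (0 : ℝ) α)
    (γ : ℤ → ℝ) (hγ_nonneg : ∀ t, 0 ≤ γ t) (hγ_zero : ∀ t : ℤ, t ≤ 0 → γ t = 0)
    (hγ_anti : ∀ s t : ℤ, 1 ≤ s → s ≤ t → γ t ≤ γ s)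
    (hγ_sum : ∀ T : ℕ, ∑ t ∈ Finset.Icc 1 T, γ (t : ℤ) ≤ 1)
    (γ' : ℕ → ℝ) (hγ'_pos : ∀ t, 1 ≤ t → 0 < γ' t)
    (hγ'_anti : ∀ s t : ℕ, 1 ≤ s → s ≤ t → γ' t ≤ γ' s)
    (hγ'_sum : ∀ T : ℕ, 1 ≤ T → ∑ t ∈ Finset.Icc 1 T, δ ^ (T - t) * γ' t ≤ 1)
    (R : ℕ → ℝ) (hR : ∀ t, R t = 0 ∨ R t = 1)
    (A : ℕ → ℝ)
    (hA : ∀ t : ℕ,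
      A t = w₀ * γ' t + (α - w₀) * ∑' j : ℕ, decayTerm δ γ t (rejTime R (j + 1)))
    (T : ℕ) (hT : 1 ≤ T) :
    ∑ t ∈ Finset.Icc 1 T, δ ^ (T - t) * A t
      ≤ α * max (∑ t ∈ Finset.Icc 1 T, δ ^ (T - t) * R t) 1 :=
  lord_decay_standard_fdr_oracle_bound_general δ α w₀ hδ hw₀ γ hγ_zero hγ_sum γ' hγ'_sum R hR A hA T
    hT
end
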